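/- arXiv:1002.2164 — 2 statements merged into one kernel-verified Lean document; each statement's English description precedes it below -/
import Mathlib

section
/- Let p_j, q_j > 0 for j = 1,...,M with ∑_j p_j = ∑_j q_j = 1, and for real numbers a_1,...,a_M define Ĉ(a) = 1 - (1/2)∑_j [p_j·log₂(1+e^{-a_j}) + q_j·log₂(1+e^{a_j})]. Then Ĉ(a) ≤ Ĉ(l) where l_j = log(p_j/q_j), with equality if and only if a_j = l_j for all j. -/
open Real Finset

lemma shape_aux (y : ℝ) : Real.log (1 + Real.exp (-y)) = Real.log (1 + Real.exp y) - y := by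
  have h : (1 : ℝ) + Real.exp (-y) = (1 + Real.exp y) * Real.exp (-y) := by
    rw [Real.exp_neg]
    field_simp [(Real.exp_pos y).ne']
    ring
  rw [h, Real.log_mul (by positivity) (Real.exp_pos _).ne', Real.log_exp]
  ring

lemma key_lt (p q x : ℝ) (hp : 0 < p) (hq : 0 < q) (hx : x ≠ Real.log (p / q)) :
    p * Real.log (1 + Real.exp (-(Real.log (p / q)))) +
      q * Real.log (1 + Real.exp (Real.log (p / q)))
      < p * Real.log (1 + Real.exp (-x)) + q * Real.log (1 + Real.exp x) := by
  set l := Real.log (p / q) with hldef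
  set s := p + q with hs
  have hspos : 0 < s := by positivity
  set t := x - l with htdef
  have ht0 : t ≠ 0 := sub_ne_zero.mpr hx
  have hel : Real.exp l = p / q := Real.exp_log (by positivity)
  have hex : Real.exp x = (p / q) * Real.exp t := by
    rw [show x = l + t by ring, Real.exp_add, hel]
  have hconv : Real.exp ((p / s) * t) < q / s + (p / s) * Real.exp t := by
    have h := strictConvexOn_exp.2 (Set.mem_univ 0) (Set.mem_univ t) (Ne.symm ht0)
      (by positivity : (0:ℝ) < q / s) (by positivity : (0:ℝ) < p / s)
      (by field_simp; rw [hs]; ring)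
    simpa [Real.exp_zero, smul_eq_mul] using h
  have hpos1 : (0:ℝ) < q + p * Real.exp t := by positivity
  have hlog : (p / s) * t < Real.log (q + p * Real.exp t) - Real.log s := by
    have h2 := Real.log_lt_log (Real.exp_pos _) hconv
    rw [Real.log_exp] at h2
    have he : q / s + (p / s) * Real.exp t = (q + p * Real.exp t) / s := by
      rw [add_div]; ring
    rw [he, Real.log_div hpos1.ne' hspos.ne'] at h2
    exact h2
  have hlog2 : p * t < (p + q) * Real.log (q + p * Real.exp t) - (p + q) * Real.log s := by
    have h3 := mul_lt_mul_of_pos_left hlog hspos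
    have : s * ((p / s) * t) = p * t := by field_simp
    rw [this] at h3
    rw [hs] at h3 ⊢
    linarith [h3]
  have hA : Real.log (1 + Real.exp l) = Real.log s - Real.log q := by
    rw [hel, show (1:ℝ) + p / q = s / q by rw [hs]; field_simp; ring,
      Real.log_div hspos.ne' hq.ne']
  have hB : Real.log (1 + Real.exp x) = Real.log (q + p * Real.exp t) - Real.log q := by
    rw [hex, show (1:ℝ) + (p / q) * Real.exp t = (q + p * Real.exp t) / q by field_simp,
      Real.log_div hpos1.ne' hq.ne']
  rw [shape_aux l, shape_aux x, hA, hB]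
  have hxlt : x = l + t := by ring
  rw [hxlt]
  nlinarith [hlog2]

theorem stmt_1 (M : ℕ) (p q : Fin M → ℝ)
    (hp : ∀ j, 0 < p j) (hq : ∀ j, 0 < q j)
    (hps : ∑ j, p j = 1) (hqs : ∑ j, q j = 1)
    (C : (Fin M → ℝ) → ℝ)
    (hC : ∀ a, C a = 1 - (1 / 2) * ∑ j,
      (p j * Real.logb 2 (1 + Real.exp (-(a j))) + q j * Real.logb 2 (1 + Real.exp (a j))))
    (l : Fin M → ℝ) (hl : ∀ j, l j = Real.log (p j / q j)) :
    ∀ a : Fin M → ℝ, C a ≤ C l ∧ (C a = C l ↔ ∀ j, a j = l j) := by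
  have hlog2pos : (0:ℝ) < Real.log 2 := Real.log_pos one_lt_two
  intro a
  set L := Real.log 2 with hL
  have keyb : ∀ j, a j ≠ l j →
      (p j * Real.logb 2 (1 + Real.exp (-(l j))) + q j * Real.logb 2 (1 + Real.exp (l j)))
      < (p j * Real.logb 2 (1 + Real.exp (-(a j))) + q j * Real.logb 2 (1 + Real.exp (a j))) := by
    intro j hne
    have hk := key_lt (p j) (q j) (a j) (hp j) (hq j) (by rw [← hl j]; exact hne)
    rw [hl j] at *
    simp only [Real.logb, ← hL]
    have e : ∀ u v A B : ℝ, u * (A / L) + v * (B / L) = (u * A + v * B) / L := by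
      intro u v A B; ring
    rw [e, e]
    exact (div_lt_div_iff_of_pos_right hlog2pos).mpr hk
  have keyle : ∀ j ∈ Finset.univ,
      (p j * Real.logb 2 (1 + Real.exp (-(l j))) + q j * Real.logb 2 (1 + Real.exp (l j)))
      ≤ (p j * Real.logb 2 (1 + Real.exp (-(a j))) + q j * Real.logb 2 (1 + Real.exp (a j))) := by
    intro j _
    by_cases h : a j = l j
    · rw [h]
    · exact (keyb j h).le
  have hsum : (∑ j, (p j * Real.logb 2 (1 + Real.exp (-(l j))) + q j * Real.logb 2 (1 + Real.exp (l j))))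
      ≤ ∑ j, (p j * Real.logb 2 (1 + Real.exp (-(a j))) + q j * Real.logb 2 (1 + Real.exp (a j))) :=
    Finset.sum_le_sum keyle
  refine ⟨by rw [hC a, hC l]; linarith, ?_, fun h => by rw [funext h]⟩
  intro h
  by_contra hcon
  push_neg at hcon
  obtain ⟨j, hj⟩ := hcon
  have hstrict := Finset.sum_lt_sum keyle ⟨j, Finset.mem_univ j, keyb j hj⟩
  rw [hC a, hC l] at h
  linarith
end

section
/- For p, q > 0 the function φ(a) = p·log₂(1+e^{−a}) + q·log₂(1+e^{a}) satisfies φ(a) − φ(log(p/q)) ≥ 0 for all a, with the difference equal to a Kullback–Leibler-type expression: φ(a) − φ(l*) = (p+q)/ln 2 · [r·ln(r/s) + (1−r)·ln((1−r)/(1−s))] where l* = log(p/q), r = p/(p+q), and s = 1/(1+e^{−a}). -/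
theorem stmt_18 (p q : ℝ) (hp : 0 < p) (hq : 0 < q) :
    ∀ a : ℝ,
      0 ≤ (p * Real.logb 2 (1 + Real.exp (-a)) + q * Real.logb 2 (1 + Real.exp a)) -
          (p * Real.logb 2 (1 + Real.exp (-(Real.log (p / q)))) +
            q * Real.logb 2 (1 + Real.exp (Real.log (p / q)))) ∧
      (p * Real.logb 2 (1 + Real.exp (-a)) + q * Real.logb 2 (1 + Real.exp a)) -
          (p * Real.logb 2 (1 + Real.exp (-(Real.log (p / q)))) +
            q * Real.logb 2 (1 + Real.exp (Real.log (p / q)))) =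
        (p + q) / Real.log 2 *
          ((p / (p + q)) * Real.log ((p / (p + q)) / (1 / (1 + Real.exp (-a)))) +
            (1 - p / (p + q)) *
              Real.log ((1 - p / (p + q)) / (1 - 1 / (1 + Real.exp (-a))))) := by
  intro a
  have hpq : 0 < p + q := by linarith
  have he0 : 0 < Real.exp (-a) := Real.exp_pos _
  set e : ℝ := Real.exp (-a) with he
  have h1e : 0 < 1 + e := by linarith
  -- s and r
  have hs0 : 0 < 1 / (1 + e) := by positivity
  have hs1 : 1 / (1 + e) < 1 := by
    rw [div_lt_one h1e]; linarith
  have hr0 : 0 < p / (p + q) := div_pos hp hpq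
  have hr1 : p / (p + q) < 1 := by rw [div_lt_one hpq]; linarith
  set s : ℝ := 1 / (1 + e) with hs
  set r : ℝ := p / (p + q) with hr
  have h1s : 0 < 1 - s := by linarith
  have h1r : 0 < 1 - r := by linarith
  -- rewrite exp terms at l*
  have hexp1 : Real.exp (-(Real.log (p / q))) = q / p := by
    rw [Real.exp_neg, Real.exp_log (div_pos hp hq)]
    rw [inv_div]
  have hexp2 : Real.exp (Real.log (p / q)) = p / q := Real.exp_log (div_pos hp hq)
  -- exp a = e⁻¹
  have hexpa : Real.exp a = e⁻¹ := by
    rw [he, ← Real.exp_neg, neg_neg]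
  -- log identities
  have hlog2 : (0:ℝ) < Real.log 2 := Real.log_pos (by norm_num)
  have hlogs : Real.log s = - Real.log (1 + e) := by
    rw [hs, one_div, Real.log_inv]
  have hlog1s : Real.log (1 - s) = Real.log e - Real.log (1 + e) := by
    have : 1 - s = e / (1 + e) := by rw [hs]; field_simp; ring
    rw [this, Real.log_div (ne_of_gt he0) (ne_of_gt h1e)]
  have hlogexpa : Real.log (1 + Real.exp a) = - Real.log (1 - s) := by
    have h : 1 + Real.exp a = (1 + e) / e := by rw [hexpa]; field_simp; ring
    rw [h, Real.log_div (ne_of_gt h1e) (ne_of_gt he0), hlog1s]; ring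
  have hlogr : Real.log r = Real.log p - Real.log (p + q) := by
    rw [hr, Real.log_div (ne_of_gt hp) (ne_of_gt hpq)]
  have h1rq : 1 - r = q / (p + q) := by rw [hr]; field_simp; ring
  have hlog1r : Real.log (1 - r) = Real.log q - Real.log (p + q) := by
    rw [h1rq, Real.log_div (ne_of_gt hq) (ne_of_gt hpq)]
  have hlogqp : Real.log (1 + q / p) = Real.log (p + q) - Real.log p := by
    have : 1 + q / p = (p + q) / p := by field_simp
    rw [this, Real.log_div (ne_of_gt hpq) (ne_of_gt hp)]
  have hlogpq : Real.log (1 + p / q) = Real.log (p + q) - Real.log q := by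
    have : 1 + p / q = (p + q) / q := by field_simp; ring
    rw [this, Real.log_div (ne_of_gt hpq) (ne_of_gt hq)]
  -- the equality
  have heq : (p * Real.logb 2 (1 + Real.exp (-a)) + q * Real.logb 2 (1 + Real.exp a)) -
          (p * Real.logb 2 (1 + Real.exp (-(Real.log (p / q)))) +
            q * Real.logb 2 (1 + Real.exp (Real.log (p / q)))) =
        (p + q) / Real.log 2 *
          (r * Real.log (r / s) + (1 - r) * Real.log ((1 - r) / (1 - s))) := by
    simp only [Real.logb, hexp1, hexp2, ← he]
    rw [hlogexpa, hlogqp, hlogpq,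
      Real.log_div (ne_of_gt hr0) (ne_of_gt hs0),
      Real.log_div (ne_of_gt h1r) (ne_of_gt h1s),
      hlogr, hlog1r, hlogs, hlog1s]
    have hrdef : r * (p + q) = p := by rw [hr]; field_simp
    have h1rdef : (1 - r) * (p + q) = q := by rw [h1rq]; field_simp
    linear_combination (-(Real.log p - Real.log (p + q) + Real.log (1 + e)) / Real.log 2) * hrdef +
      (-(Real.log q - Real.log (p + q) - Real.log e + Real.log (1 + e)) / Real.log 2) * h1rdef
  constructor
  · rw [heq]
    apply mul_nonneg (by positivity)
    have key1 : Real.log (s / r) ≤ s / r - 1 := Real.log_le_sub_one_of_pos (by positivity)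
    have key2 : Real.log ((1 - s) / (1 - r)) ≤ (1 - s) / (1 - r) - 1 :=
      Real.log_le_sub_one_of_pos (by positivity)
    have e1 : Real.log (r / s) = Real.log r - Real.log s :=
      Real.log_div (ne_of_gt hr0) (ne_of_gt hs0)
    have e2 : Real.log (s / r) = Real.log s - Real.log r :=
      Real.log_div (ne_of_gt hs0) (ne_of_gt hr0)
    have e3 : Real.log ((1 - r) / (1 - s)) = Real.log (1 - r) - Real.log (1 - s) :=
      Real.log_div (ne_of_gt h1r) (ne_of_gt h1s)
    have e4 : Real.log ((1 - s) / (1 - r)) = Real.log (1 - s) - Real.log (1 - r) :=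
      Real.log_div (ne_of_gt h1s) (ne_of_gt h1r)
    have hk1 : r * (Real.log s - Real.log r) ≤ s - r := by
      have h := mul_le_mul_of_nonneg_left key1 (le_of_lt hr0)
      rw [e2] at h
      have h2 : r * (s / r - 1) = s - r := by field_simp
      linarith
    have hk2 : (1 - r) * (Real.log (1 - s) - Real.log (1 - r)) ≤ (1 - s) - (1 - r) := by
      have h := mul_le_mul_of_nonneg_left key2 (le_of_lt h1r)
      rw [e4] at h
      have h2 : (1 - r) * ((1 - s) / (1 - r) - 1) = (1 - s) - (1 - r) := by field_simp
      linarith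
    rw [e1, e3]
    linarith [hk1, hk2]
  · exact heq
end
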